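/- With the Case 1 Frenet frame for a spacelike curve in AdS⁴ and λ₀ = γ(s₀) - (1/κ₁(s₀))(n^T(s₀)+cos θ₀ b₁(s₀)+sin θ₀ b₂(s₀)), the third derivative of the height function h(s) = ⟨γ(s),λ₀⟩+1 vanishes at s₀ (in addition to h = h' = h'' = 0) if and only if κ₁'(s₀) - cos θ₀ κ₁(s₀)κ₂(s₀) = 0. -/

import Mathlib

/-!
Differentiating with the Frenet equations gives `h' = ⟨t, λ₀⟩`, `h'' = ⟨γ, λ₀⟩ + κ₁ ⟨nᵀ, λ₀⟩` and
`h''' = (1 + κ₁²) ⟨t, λ₀⟩ + κ₁' ⟨nᵀ, λ₀⟩ + κ₁ κ₂ ⟨b₁, λ₀⟩`. Pairing the pseudo-orthonormal frame at `s₀`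
with `λ₀` gives `⟨t, λ₀⟩ = 0`, `⟨nᵀ, λ₀⟩ = 1 / κ₁` and `⟨b₁, λ₀⟩ = -cos θ₀ / κ₁`, so
`h'''(s₀) = (κ₁' - cos θ₀ κ₁ κ₂) / κ₁`, which vanishes exactly when the numerator does.
-/

/-- The pseudo scalar product of index 2 on `ℝ^{n+2}`. -/
noncomputable def pr {n : ℕ} (x y : Fin (n + 2) → ℝ) : ℝ :=
  ∑ i : Fin (n + 2), (if (i : ℕ) < 2 then (-1 : ℝ) else 1) * x i * y i

section PseudoScalarProduct

variable {n : ℕ}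

theorem pr_comm (x y : Fin (n + 2) → ℝ) : pr x y = pr y x := by
  unfold pr
  exact Finset.sum_congr rfl fun i _ => by ring

theorem pr_add_right (x y z : Fin (n + 2) → ℝ) : pr x (y + z) = pr x y + pr x z := by
  unfold pr
  rw [← Finset.sum_add_distrib]
  exact Finset.sum_congr rfl fun i _ => by simp only [Pi.add_apply]; ring

theorem pr_sub_right (x y z : Fin (n + 2) → ℝ) : pr x (y - z) = pr x y - pr x z := by
  unfold pr
  rw [← Finset.sum_sub_distrib]
  exact Finset.sum_congr rfl fun i _ => by simp only [Pi.sub_apply]; ring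

theorem pr_smul_right (c : ℝ) (x y : Fin (n + 2) → ℝ) : pr x (c • y) = c * pr x y := by
  unfold pr
  rw [Finset.mul_sum]
  exact Finset.sum_congr rfl fun i _ => by simp only [Pi.smul_apply, smul_eq_mul]; ring

theorem pr_add_left (x y z : Fin (n + 2) → ℝ) : pr (x + y) z = pr x z + pr y z := by
  rw [pr_comm, pr_add_right, pr_comm x z, pr_comm y z]

theorem pr_smul_left (c : ℝ) (x y : Fin (n + 2) → ℝ) : pr (c • x) y = c * pr x y := by
  rw [pr_comm, pr_smul_right, pr_comm]

theorem pr_sub_smul_add_add (x g a b₁ b₂ : Fin (n + 2) → ℝ) (c p q : ℝ) :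
    pr x (g - c • (a + p • b₁ + q • b₂)) = pr x g - c * (pr x a + p * pr x b₁ + q * pr x b₂) := by
  rw [pr_sub_right, pr_smul_right, pr_add_right, pr_add_right, pr_smul_right, pr_smul_right]

theorem HasDerivAt.pr_const {v : ℝ → Fin (n + 2) → ℝ} {v' : Fin (n + 2) → ℝ} {s : ℝ}
    (hv : HasDerivAt v v' s) (l : Fin (n + 2) → ℝ) :
    HasDerivAt (fun u => pr (v u) l) (pr v' l) s := by
  unfold pr
  exact HasDerivAt.fun_sum fun i _ => ((hasDerivAt_pi.1 hv i).const_mul _).mul_const _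

theorem deriv_pr_const {v : ℝ → Fin (n + 2) → ℝ} (hv : Differentiable ℝ v)
    (l : Fin (n + 2) → ℝ) :
    deriv (fun u => pr (v u) l) = fun u => pr (deriv v u) l :=
  funext fun u => ((hv u).hasDerivAt.pr_const l).deriv

end PseudoScalarProduct

theorem deriv_deriv_deriv_height {n : ℕ} {γ t nT b₁ : ℝ → Fin (n + 2) → ℝ} {κ₁ κ₂ : ℝ → ℝ}
    (hdγ : Differentiable ℝ γ) (hdt : Differentiable ℝ t) (hdT : Differentiable ℝ nT)
    (hdκ₁ : Differentiable ℝ κ₁)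
    (hF1 : ∀ s, deriv γ s = t s)
    (hF2 : ∀ s, deriv t s = γ s + κ₁ s • nT s)
    (hF3 : ∀ s, deriv nT s = κ₁ s • t s + κ₂ s • b₁ s)
    (l : Fin (n + 2) → ℝ) (c s : ℝ) :
    deriv (deriv (deriv fun u => pr (γ u) l + c)) s =
      (1 + κ₁ s ^ 2) * pr (t s) l + deriv κ₁ s * pr (nT s) l + κ₁ s * κ₂ s * pr (b₁ s) l := by
  have h₁ : deriv (fun u => pr (γ u) l + c) = fun u => pr (t u) l := by
    funext u
    simp only [deriv_add_const, deriv_pr_const hdγ, hF1]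
  have h₂ : deriv (fun u => pr (t u) l) = fun u => pr (γ u) l + κ₁ u * pr (nT u) l := by
    rw [deriv_pr_const hdt]
    simp only [hF2, pr_add_left, pr_smul_left]
  have h₃ := ((hdγ s).hasDerivAt.pr_const l).fun_add
    ((hdκ₁ s).hasDerivAt.fun_mul ((hdT s).hasDerivAt.pr_const l))
  rw [h₁, h₂, h₃.deriv, hF1, hF3, pr_add_left, pr_smul_left, pr_smul_left]
  ring

theorem stmt12_general (γ t nT b₁ b₂ : ℝ → Fin 5 → ℝ) (κ₁ κ₂ : ℝ → ℝ)
    (hTT : ∀ s, pr (nT s) (nT s) = -1)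
    (h11 : ∀ s, pr (b₁ s) (b₁ s) = 1)
    (hγt : ∀ s, pr (γ s) (t s) = 0) (hγT : ∀ s, pr (γ s) (nT s) = 0)
    (hγ1 : ∀ s, pr (γ s) (b₁ s) = 0)
    (htT : ∀ s, pr (t s) (nT s) = 0) (ht1 : ∀ s, pr (t s) (b₁ s) = 0)
    (ht2 : ∀ s, pr (t s) (b₂ s) = 0) (hT1 : ∀ s, pr (nT s) (b₁ s) = 0)
    (hT2 : ∀ s, pr (nT s) (b₂ s) = 0) (h12 : ∀ s, pr (b₁ s) (b₂ s) = 0)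
    (hdγ : Differentiable ℝ γ) (hdt : Differentiable ℝ t)
    (hdT : Differentiable ℝ nT)
    (hF1 : ∀ s, deriv γ s = t s)
    (hF2 : ∀ s, deriv t s = γ s + κ₁ s • nT s)
    (hF3 : ∀ s, deriv nT s = κ₁ s • t s + κ₂ s • b₁ s)
    (hdκ₁ : Differentiable ℝ κ₁)
    (s₀ : ℝ) (hκ₁ : κ₁ s₀ ≠ 0) (θ₀ : ℝ)
    (l₀ : Fin 5 → ℝ)
    (hl : l₀ = γ s₀ - (1 / κ₁ s₀) • (nT s₀ + Real.cos θ₀ • b₁ s₀ + Real.sin θ₀ • b₂ s₀)) :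
    deriv (deriv (deriv (fun s => pr (γ s) l₀ + 1))) s₀ = 0 ↔
      deriv κ₁ s₀ - Real.cos θ₀ * (κ₁ s₀ * κ₂ s₀) = 0 := by
  have ht : pr (t s₀) l₀ = 0 := by
    rw [hl, pr_sub_smul_add_add, pr_comm, hγt, htT, ht1, ht2]
    ring
  have hT : pr (nT s₀) l₀ = 1 / κ₁ s₀ := by
    rw [hl, pr_sub_smul_add_add, pr_comm, hγT, hTT, hT1, hT2]
    ring
  have hb : pr (b₁ s₀) l₀ = -Real.cos θ₀ / κ₁ s₀ := by
    rw [hl, pr_sub_smul_add_add, pr_comm, hγ1, pr_comm _ (nT s₀), hT1, h11, h12]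
    ring
  have h₃ : deriv (deriv (deriv (fun s => pr (γ s) l₀ + 1))) s₀ =
      (deriv κ₁ s₀ - Real.cos θ₀ * (κ₁ s₀ * κ₂ s₀)) / κ₁ s₀ := by
    rw [deriv_deriv_deriv_height hdγ hdt hdT hdκ₁ hF1 hF2 hF3, ht, hT, hb]
    field_simp
    ring
  rw [h₃, div_eq_zero_iff, or_iff_left hκ₁]

theorem stmt12 (γ t nT b₁ b₂ : ℝ → Fin 5 → ℝ) (κ₁ κ₂ κ₃ : ℝ → ℝ)
    (hγγ : ∀ s, pr (γ s) (γ s) = -1) (htt : ∀ s, pr (t s) (t s) = 1)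
    (hTT : ∀ s, pr (nT s) (nT s) = -1)
    (h11 : ∀ s, pr (b₁ s) (b₁ s) = 1) (h22 : ∀ s, pr (b₂ s) (b₂ s) = 1)
    (hγt : ∀ s, pr (γ s) (t s) = 0) (hγT : ∀ s, pr (γ s) (nT s) = 0)
    (hγ1 : ∀ s, pr (γ s) (b₁ s) = 0) (hγ2 : ∀ s, pr (γ s) (b₂ s) = 0)
    (htT : ∀ s, pr (t s) (nT s) = 0) (ht1 : ∀ s, pr (t s) (b₁ s) = 0)
    (ht2 : ∀ s, pr (t s) (b₂ s) = 0) (hT1 : ∀ s, pr (nT s) (b₁ s) = 0)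
    (hT2 : ∀ s, pr (nT s) (b₂ s) = 0) (h12 : ∀ s, pr (b₁ s) (b₂ s) = 0)
    (hdγ : Differentiable ℝ γ) (hdt : Differentiable ℝ t)
    (hdT : Differentiable ℝ nT) (hd1 : Differentiable ℝ b₁) (hd2 : Differentiable ℝ b₂)
    (hF1 : ∀ s, deriv γ s = t s)
    (hF2 : ∀ s, deriv t s = γ s + κ₁ s • nT s)
    (hF3 : ∀ s, deriv nT s = κ₁ s • t s + κ₂ s • b₁ s)
    (hF4 : ∀ s, deriv b₁ s = κ₂ s • nT s + κ₃ s • b₂ s)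
    (hF5 : ∀ s, deriv b₂ s = -(κ₃ s) • b₁ s)
    (hdκ₁ : Differentiable ℝ κ₁) (hdκ₂ : Differentiable ℝ κ₂)
    (hdκ₃ : Differentiable ℝ κ₃)
    (s₀ : ℝ) (hκ₁ : κ₁ s₀ ≠ 0) (θ₀ : ℝ)
    (l₀ : Fin 5 → ℝ)
    (hl : l₀ = γ s₀ - (1 / κ₁ s₀) • (nT s₀ + Real.cos θ₀ • b₁ s₀ + Real.sin θ₀ • b₂ s₀)) :
    deriv (deriv (deriv (fun s => pr (γ s) l₀ + 1))) s₀ = 0 ↔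
      deriv κ₁ s₀ - Real.cos θ₀ * (κ₁ s₀ * κ₂ s₀) = 0 :=
  stmt12_general γ t nT b₁ b₂ κ₁ κ₂ hTT h11 hγt hγT hγ1 htT ht1 ht2 hT1 hT2 h12 hdγ hdt hdT hF1 hF2
    hF3 hdκ₁ s₀ hκ₁ θ₀ l₀ hl
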